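/- arXiv:1505.07009 — 3 statements merged into one kernel-verified Lean document; each statement's English description precedes it below -/
import Mathlib

section
/- Let k ≥ 1 be an integer, let s ∈ ℂ be such that 2s is not a nonpositive integer, and let r ∈ ℂ with |r| < 1. Then 2k(r+2k)·₂F₁(s+k, s+k; 2s; r) + 4k(s−k)·₂F₁(s+k, s+k−1; 2s; r) + (s−k)²·₂F₁(s+k−1, s+k−1; 2s; r) = (s+k)²(1−r)²·₂F₁(s+k+1, s+k+1; 2s; r). -/
open Complex

/-- The Gauss hypergeometric series `₂F₁(a,b;c;x) = ∑ₙ (a)ₙ(b)ₙ/((c)ₙ n!) xⁿ`. -/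
noncomputable def hyp2F1 (a b c x : ℂ) : ℂ :=
  ∑' n : ℕ, (ascPochhammer ℂ n).eval a * (ascPochhammer ℂ n).eval b /
    ((ascPochhammer ℂ n).eval c * (n.factorial : ℂ)) * x ^ n

/-!
Put `a = s + k` and `c = 2s`, so that `2k = 2a - c` and `s - k = c - a`; the identity becomes a
contiguous relation between `₂F₁(a, a; c; r)`, `₂F₁(a, a - 1; c; r)`, `₂F₁(a - 1, a - 1; c; r)`
and `₂F₁(a + 1, a + 1; c; r)`. All four series converge for `|r| < 1`, so it suffices to compare
coefficients. Those of `r⁰` and `r¹` are checked directly; the coefficient of `r^(n+2)` of every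
term is `(a + 1)ₙ² / ((c)ₙ n!)` times a rational function of `n`, and the relation reduces to a
polynomial identity.
-/

open Polynomial

theorem add_mul_add_sq_mul_eq_zero_of_hasSum {R : Type*} [CommRing R] [TopologicalSpace R]
    [IsTopologicalRing R] [T2Space R] {α β γ : ℕ → R} {A B C r : R}
    (hα : HasSum (fun n => α n * r ^ n) A) (hβ : HasSum (fun n => β n * r ^ n) B)
    (hγ : HasSum (fun n => γ n * r ^ n) C) (h₀ : α 0 = 0) (h₁ : α 1 + β 0 = 0)
    (hrec : ∀ n, α (n + 2) + β (n + 1) + γ n = 0) :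
    A + r * B + r ^ 2 * C = 0 := by
  have hα₂ := (hasSum_nat_add_iff' 2).mpr hα
  have hβ₁ := ((hasSum_nat_add_iff' 1).mpr hβ).mul_left r
  have hsum := (hα₂.add hβ₁).add (hγ.mul_left (r ^ 2))
  have hzero : HasSum (fun n => (α (n + 2) + β (n + 1) + γ n) * r ^ (n + 2)) 0 := by
    simpa only [hrec, zero_mul] using hasSum_zero
  have hvalue := hsum.unique (hzero.congr_fun fun n => by ring)
  simp only [Finset.sum_range_succ, Finset.sum_range_zero, h₀] at hvalue
  linear_combination hvalue + r * h₁

theorem ascPochhammer_succ_eval_left {S : Type*} [CommSemiring S] (n : ℕ) (x : S) :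
    (ascPochhammer S (n + 1)).eval x = x * (ascPochhammer S n).eval (x + 1) := by
  simp [ascPochhammer_succ_left, eval_comp]

theorem ascPochhammer_eval_ne_zero {R : Type*} [CommRing R] [IsDomain R] {c : R}
    (hc : ∀ n : ℕ, c ≠ -n) (n : ℕ) : (ascPochhammer R n).eval c ≠ 0 := by
  rw [Ne, ascPochhammer_eval_eq_zero_iff]
  rintro ⟨k, -, hk⟩
  exact hc k (by linear_combination hk)

theorem one_le_radius_ordinaryHypergeometricSeries {𝕂 : Type*} (𝔸 : Type*) [RCLike 𝕂]
    [NormedDivisionRing 𝔸] [NormedAlgebra 𝕂 𝔸] (a b c : 𝕂) (hc : ∀ n : ℕ, c ≠ -n) :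
    1 ≤ (ordinaryHypergeometricSeries 𝔸 a b c).radius := by
  by_cases ha : ∃ k : ℕ, a = -k
  · obtain ⟨k, rfl⟩ := ha
    simp [ordinaryHypergeometric_radius_top_of_neg_nat₁]
  by_cases hb : ∃ k : ℕ, b = -k
  · obtain ⟨k, rfl⟩ := hb
    simp [ordinaryHypergeometric_radius_top_of_neg_nat₂]
  push Not at ha hb
  rw [ordinaryHypergeometricSeries_radius_eq_one]
  intro k
  refine ⟨fun h => ha k ?_, fun h => hb k ?_, fun h => hc k ?_⟩ <;> linear_combination h

noncomputable def hyp2F1Coeff (a b c : ℂ) (n : ℕ) : ℂ :=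
  (ascPochhammer ℂ n).eval a * (ascPochhammer ℂ n).eval b /
    ((ascPochhammer ℂ n).eval c * (n.factorial : ℂ))

@[simp]
theorem hyp2F1Coeff_zero (a b c : ℂ) : hyp2F1Coeff a b c 0 = 1 := by
  simp [hyp2F1Coeff]

@[simp]
theorem hyp2F1Coeff_one (a b c : ℂ) : hyp2F1Coeff a b c 1 = a * b / c := by
  simp [hyp2F1Coeff]

theorem hasSum_hyp2F1 (a b c : ℂ) (hc : ∀ n : ℕ, c ≠ -n) {r : ℂ} (hr : ‖r‖ < 1) :
    HasSum (fun n => hyp2F1Coeff a b c n * r ^ n) (hyp2F1 a b c r) := by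
  have hmem : r ∈ Metric.eball (0 : ℂ) (ordinaryHypergeometricSeries ℂ a b c).radius := by
    refine lt_of_lt_of_le ?_ (one_le_radius_ordinaryHypergeometricSeries ℂ a b c hc)
    rw [edist_zero_right, enorm_eq_nnnorm, ENNReal.coe_lt_one_iff, ← NNReal.coe_lt_one]
    exact hr
  have hterm : (fun n => ordinaryHypergeometricSeries ℂ a b c n fun _ => r) =
      fun n => hyp2F1Coeff a b c n * r ^ n := by
    rw [ordinaryHypergeometricSeries_apply_eq']
    ext n
    simp only [hyp2F1Coeff, smul_eq_mul]
    ring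
  have hsummable := (ordinaryHypergeometricSeries ℂ a b c).summable hmem
  rw [hterm] at hsummable
  exact hsummable.hasSum

theorem hyp2F1Coeff_contiguous (a c : ℂ) (hc : ∀ n : ℕ, c ≠ -n) (n : ℕ) :
    (2 * a - c) * hyp2F1Coeff a a c (n + 1) + (2 * a - c) ^ 2 * hyp2F1Coeff a a c (n + 2)
      + 2 * (2 * a - c) * (c - a) * hyp2F1Coeff a (a - 1) c (n + 2)
      + (c - a) ^ 2 * hyp2F1Coeff (a - 1) (a - 1) c (n + 2)
    = a ^ 2 * (hyp2F1Coeff (a + 1) (a + 1) c (n + 2) - 2 * hyp2F1Coeff (a + 1) (a + 1) c (n + 1)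
      + hyp2F1Coeff (a + 1) (a + 1) c n) := by
  have hcn (m : ℕ) : c + m ≠ 0 := fun h => hc m (by linear_combination h)
  have := hcn n
  have := hcn (n + 1)
  have := ascPochhammer_eval_ne_zero hc n
  have := n.cast_add_one_ne_zero (R := ℂ)
  have := (n + 1).cast_add_one_ne_zero (R := ℂ)
  have : (n.factorial : ℂ) ≠ 0 := Nat.cast_ne_zero.mpr n.factorial_ne_zero
  -- express every Pochhammer symbol through `(a + 1)ₙ` and `(c)ₙ`
  simp only [hyp2F1Coeff, ascPochhammer_succ_eval_left _ a, ascPochhammer_succ_eval_left _ (a - 1),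
    sub_add_cancel, ascPochhammer_succ_eval _ (a + 1), ascPochhammer_succ_eval _ c,
    Nat.factorial_succ]
  push_cast at *
  field_simp
  ring

theorem hyp2F1_contiguous (a c : ℂ) (hc : ∀ n : ℕ, c ≠ -n) {r : ℂ} (hr : ‖r‖ < 1) :
    (2 * a - c) * (r + (2 * a - c)) * hyp2F1 a a c r
      + 2 * (2 * a - c) * (c - a) * hyp2F1 a (a - 1) c r
      + (c - a) ^ 2 * hyp2F1 (a - 1) (a - 1) c r
    = a ^ 2 * (1 - r) ^ 2 * hyp2F1 (a + 1) (a + 1) c r := by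
  have hc₀ : c ≠ 0 := by simpa using hc 0
  set T := hyp2F1Coeff a a c
  set T' := hyp2F1Coeff a (a - 1) c
  set T'' := hyp2F1Coeff (a - 1) (a - 1) c
  set U := hyp2F1Coeff (a + 1) (a + 1) c
  have hT := hasSum_hyp2F1 a a c hc hr
  have hT' := hasSum_hyp2F1 a (a - 1) c hc hr
  have hT'' := hasSum_hyp2F1 (a - 1) (a - 1) c hc hr
  have hU := hasSum_hyp2F1 (a + 1) (a + 1) c hc hr
  have key := add_mul_add_sq_mul_eq_zero_of_hasSum (r := r)
    (α := fun n => (2 * a - c) ^ 2 * T n + 2 * (2 * a - c) * (c - a) * T' n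
      + (c - a) ^ 2 * T'' n - a ^ 2 * U n)
    (β := fun n => (2 * a - c) * T n + 2 * a ^ 2 * U n) (γ := fun n => -a ^ 2 * U n)
    ((((hT.mul_left ((2 * a - c) ^ 2)).add (hT'.mul_left (2 * (2 * a - c) * (c - a)))).add
      (hT''.mul_left ((c - a) ^ 2))).sub (hU.mul_left (a ^ 2)) |>.congr_fun fun n => by ring)
    ((hT.mul_left (2 * a - c)).add (hU.mul_left (2 * a ^ 2)) |>.congr_fun fun n => by ring)
    (hU.mul_left (-a ^ 2) |>.congr_fun fun n => by ring)
    (by simp only [T, T', T'', U, hyp2F1Coeff_zero]; ring)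
    (by simp only [T, T', T'', U, hyp2F1Coeff_zero, hyp2F1Coeff_one]; field_simp; ring)
    (fun n => by linear_combination hyp2F1Coeff_contiguous a c hc n)
  linear_combination key

theorem hyp2F1_contiguous_identity_general (k : ℕ) (s : ℂ)
    (hs : ∀ n : ℕ, 2 * s ≠ -(n : ℂ)) (r : ℂ) (hr : ‖r‖ < 1) :
    2 * k * (r + 2 * k) * hyp2F1 (s + k) (s + k) (2 * s) r
      + 4 * k * (s - k) * hyp2F1 (s + k) (s + k - 1) (2 * s) r
      + (s - k) ^ 2 * hyp2F1 (s + k - 1) (s + k - 1) (2 * s) r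
    = (s + k) ^ 2 * (1 - r) ^ 2 * hyp2F1 (s + k + 1) (s + k + 1) (2 * s) r := by
  linear_combination hyp2F1_contiguous (s + k) (2 * s) hs hr

/-- The contiguous-relation identity:
`2k(r+2k)·₂F₁(s+k,s+k;2s;r) + 4k(s−k)·₂F₁(s+k,s+k−1;2s;r)
  + (s−k)²·₂F₁(s+k−1,s+k−1;2s;r) = (s+k)²(1−r)²·₂F₁(s+k+1,s+k+1;2s;r)`. -/
theorem hyp2F1_contiguous_identity (k : ℕ) (hk : 1 ≤ k) (s : ℂ)
    (hs : ∀ n : ℕ, 2 * s ≠ -(n : ℂ)) (r : ℂ) (hr : ‖r‖ < 1) :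
    2 * k * (r + 2 * k) * hyp2F1 (s + k) (s + k) (2 * s) r
      + 4 * k * (s - k) * hyp2F1 (s + k) (s + k - 1) (2 * s) r
      + (s - k) ^ 2 * hyp2F1 (s + k - 1) (s + k - 1) (2 * s) r
    = (s + k) ^ 2 * (1 - r) ^ 2 * hyp2F1 (s + k + 1) (s + k + 1) (2 * s) r :=
  hyp2F1_contiguous_identity_general k s hs r hr
end

section
/- Let k ≥ 1 be an integer, let x ∈ (0,1), and let s ∈ ℂ be such that 2s is not a nonpositive integer and 2s ∉ {2, 3, …, 2k}. Then ₂F₁( 2s+2k−1, 2k; 2s; x ) = (1−x)^{−2k} · ( ∏_{i=0}^{2k−2} (2s+i) )^{−1} · ( ∏_{i=2}^{2k} (2s−i) ) · ₂F₁( −(2k−1), 2k; 2−2s; 1/(1−x) ). -/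
/-!
Put `N = 2k - 1` and `a = 2s`. The Pochhammer shift `(a)_N (a+N)_n = (a)_n (a+n)_N`, the
reflection `(a+n)_N = (-1)^N (1-a-n-N)_N` and the Chu–Vandermonde identity rewrite the `n`-th
coefficient `(a+N)_n (2k)_n / (a)_n` of the left-hand series as a finite combination
`∑_{m ≤ N} w_m (2k+m)_n`, whose weights `w_m` are, up to a constant, the coefficients of the
terminating series `₂F₁(-N, 2k; 2-2s; ·)`. Since `∑ₙ (d)_n zⁿ / n! = (1-z)^{-d}` for `d ∈ ℕ`,
summing over `n` turns each `(2k+m)_n` into `(1-x)^{-2k-m}`, which is the right-hand side.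
-/

open Complex Finset

namespace Polynomial

theorem ascPochhammer_eval_eq_prod_range {R : Type*} [CommSemiring R] (n : ℕ) (r : R) :
    (ascPochhammer R n).eval r = ∏ j ∈ range n, (r + j) := by
  induction n with
  | zero => simp
  | succ n ih => rw [ascPochhammer_succ_eval, ih, prod_range_succ]

section CommRing

variable {R : Type*} [CommRing R]

theorem ascPochhammer_eval_add (a : R) (n m : ℕ) :
    (ascPochhammer R (n + m)).eval a
      = (ascPochhammer R n).eval a * (ascPochhammer R m).eval (a + n) := by
  rw [← ascPochhammer_mul, eval_mul, eval_comp, eval_add, eval_X, eval_natCast]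

theorem ascPochhammer_eval_mul_eval_add_comm (a : R) (n m : ℕ) :
    (ascPochhammer R n).eval a * (ascPochhammer R m).eval (a + n)
      = (ascPochhammer R m).eval a * (ascPochhammer R n).eval (a + m) := by
  rw [← ascPochhammer_eval_add, ← ascPochhammer_eval_add, add_comm]

theorem ascPochhammer_eval_one_sub_sub (a : R) (n : ℕ) :
    (ascPochhammer R n).eval (1 - a - n) = (-1) ^ n * (ascPochhammer R n).eval a := by
  rw [show 1 - a - n = -(a + n - 1) by ring, ascPochhammer_eval_neg_eq_descPochhammer,
    descPochhammer_eval_eq_ascPochhammer]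
  ring_nf

theorem ascPochhammer_eval_neg_natCast (n m : ℕ) :
    (ascPochhammer R m).eval (-(n : R)) = (-1) ^ m * n.choose m * m.factorial := by
  rw [ascPochhammer_eval_neg_eq_descPochhammer, descPochhammer_eval_eq_descFactorial,
    Nat.descFactorial_eq_factorial_mul_choose]
  push_cast
  ring

/-- The Chu–Vandermonde identity, obtained from the falling-factorial binomial theorem
`Ring.descPochhammer_smeval_add` at `-b` and `c + n - 1`. -/
theorem ascPochhammer_eval_sub_eq_sum_range (b c : R) (n : ℕ) :
    (ascPochhammer R n).eval (c - b)
      = ∑ m ∈ range (n + 1), (-1) ^ m * n.choose m * (ascPochhammer R m).eval b *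
          (ascPochhammer R (n - m)).eval (c + m) := by
  have h := Ring.descPochhammer_smeval_add n (Commute.all (-b) (c + n - 1))
  simp only [descPochhammer_smeval_eq_ascPochhammer, ascPochhammer_smeval_eq_eval,
    Nat.sum_antidiagonal_eq_sum_range_succ_mk] at h
  rw [show -b + (c + n - 1) - n + 1 = c - b by ring] at h
  rw [h]
  refine sum_congr rfl fun m hm => ?_
  have hmn : m ≤ n := Nat.lt_succ_iff.mp (mem_range.mp hm)
  rw [show -b - m + 1 = 1 - b - m by ring, ascPochhammer_eval_one_sub_sub,
    show c + n - 1 - ((n - m : ℕ) : R) + 1 = c + m by push_cast [Nat.cast_sub hmn]; ring]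
  ring

theorem prod_Ico_sub_natCast_eq_ascPochhammer (a : R) (m n : ℕ) :
    ∏ i ∈ Ico m (m + n), (a - i) = (-1) ^ n * (ascPochhammer R n).eval (m - a) := by
  have h : ∀ j : ℕ, a - ((m + j : ℕ) : R) = -1 * (m - a + j) := fun j => by push_cast; ring
  rw [prod_Ico_eq_prod_range, Nat.add_sub_cancel_left, ascPochhammer_eval_eq_prod_range,
    prod_congr rfl fun j _ => h j, prod_mul_distrib, prod_const, card_range]

end CommRing

theorem ascPochhammer_eval_add_natCast_mul_div_eq_sum {K : Type*} [Field K] [CharZero K]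
    (a b : K) (N n : ℕ) (han : (ascPochhammer K n).eval a ≠ 0)
    (haN : (ascPochhammer K N).eval a ≠ 0) (hc : (ascPochhammer K N).eval (b + 1 - a - N) ≠ 0) :
    (ascPochhammer K n).eval (a + N) * (ascPochhammer K n).eval b / (ascPochhammer K n).eval a
      = (-1) ^ N * (ascPochhammer K N).eval (b + 1 - a - N) / (ascPochhammer K N).eval a *
        ∑ m ∈ range (N + 1), (ascPochhammer K m).eval (-(N : K)) * (ascPochhammer K m).eval b /
          ((ascPochhammer K m).eval (b + 1 - a - N) * m.factorial) *
          (ascPochhammer K n).eval (b + m) := by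
  set c := b + 1 - a - N with hc_def
  have hshift : (ascPochhammer K N).eval a * (ascPochhammer K n).eval (a + N)
      = (ascPochhammer K n).eval a * (ascPochhammer K N).eval (a + n) :=
    ascPochhammer_eval_mul_eval_add_comm a N n
  have hreflect : (ascPochhammer K N).eval (a + n)
      = (-1) ^ N * (ascPochhammer K N).eval (c - (b + n)) := by
    rw [show c - (b + n) = 1 - (a + n) - N by rw [hc_def]; ring, ascPochhammer_eval_one_sub_sub,
      ← mul_assoc, ← mul_pow, neg_one_mul, neg_neg, one_pow, one_mul]
  have hterm : ∀ m ∈ range (N + 1), (ascPochhammer K n).eval b *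
      ((-1) ^ m * N.choose m * (ascPochhammer K m).eval (b + n) *
        (ascPochhammer K (N - m)).eval (c + m))
      = (ascPochhammer K N).eval c * ((ascPochhammer K m).eval (-(N : K)) *
        (ascPochhammer K m).eval b / ((ascPochhammer K m).eval c * m.factorial) *
        (ascPochhammer K n).eval (b + m)) := by
    intro m hm
    have hsplit := ascPochhammer_eval_add c m (N - m)
    rw [Nat.add_sub_cancel' (Nat.lt_succ_iff.mp (mem_range.mp hm))] at hsplit
    have hcm : (ascPochhammer K m).eval c ≠ 0 := fun h => hc (by rw [hsplit, h, zero_mul])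
    have hfac : (m.factorial : K) ≠ 0 := Nat.cast_ne_zero.mpr m.factorial_ne_zero
    rw [hsplit, ascPochhammer_eval_neg_natCast]
    field_simp
    linear_combination (N.choose m * (ascPochhammer K (N - m)).eval (c + m)) *
      ascPochhammer_eval_mul_eval_add_comm b n m
  calc (ascPochhammer K n).eval (a + N) * (ascPochhammer K n).eval b / (ascPochhammer K n).eval a
      = (ascPochhammer K N).eval (a + n) * (ascPochhammer K n).eval b /
          (ascPochhammer K N).eval a := by
        rw [div_eq_div_iff han haN]
        linear_combination (ascPochhammer K n).eval b * hshift
    _ = (-1) ^ N / (ascPochhammer K N).eval a * ((ascPochhammer K n).eval b *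
          ∑ m ∈ range (N + 1), (-1) ^ m * N.choose m * (ascPochhammer K m).eval (b + n) *
            (ascPochhammer K (N - m)).eval (c + m)) := by
        rw [hreflect, ascPochhammer_eval_sub_eq_sum_range]
        ring
    _ = _ := by
        rw [mul_sum, sum_congr rfl hterm, ← mul_sum]
        ring

theorem hasSum_ascPochhammer_natCast_div_factorial_mul_pow {𝕜 : Type*} [NormedField 𝕜]
    [CompleteSpace 𝕜] [CharZero 𝕜] (d : ℕ) {z : 𝕜} (hz : ‖z‖ < 1) :
    HasSum (fun n ↦ (ascPochhammer 𝕜 n).eval (d : 𝕜) / n.factorial * z ^ n) ((1 - z) ^ d)⁻¹ := by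
  rcases d with _ | d
  · convert hasSum_ite_eq 0 (1 : 𝕜) using 2 with n
    · rcases n with _ | n <;> simp
    · simp
  · convert hasSum_choose_mul_geometric_of_norm_lt_one d hz using 2 with n
    · rw [ascPochhammer_nat_eq_natCast_ascFactorial, Nat.ascFactorial_eq_factorial_mul_choose,
        add_comm d n, ← Nat.choose_symm_add, Nat.cast_mul,
        mul_div_cancel_left₀ _ (Nat.cast_ne_zero.mpr n.factorial_ne_zero)]
    · rw [one_div]

end Polynomial

open Polynomial

theorem hyp2F1_neg_natCast_eq_sum (N : ℕ) (b c w : ℂ) :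
    hyp2F1 (-N) b c w = ∑ m ∈ range (N + 1), (ascPochhammer ℂ m).eval (-(N : ℂ)) *
      (ascPochhammer ℂ m).eval b / ((ascPochhammer ℂ m).eval c * m.factorial) * w ^ m := by
  refine tsum_eq_sum fun m hm => ?_
  rw [ascPochhammer_eval_neg_coe_nat_of_lt (by simpa using hm), zero_mul, zero_div, zero_mul]

theorem hyp2F1_add_natCast_eq_hyp2F1_neg_natCast (a : ℂ) (N d : ℕ) (ha : ∀ n : ℕ, a ≠ -n)
    (hc : (ascPochhammer ℂ N).eval (d + 1 - a - N) ≠ 0) {z : ℂ} (hz : ‖z‖ < 1) :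
    hyp2F1 (a + N) d a z = (-1) ^ N * (ascPochhammer ℂ N).eval (d + 1 - a - N) /
      (ascPochhammer ℂ N).eval a * ((1 - z) ^ d)⁻¹ * hyp2F1 (-N) d (d + 1 - a - N) (1 - z)⁻¹ := by
  have ha' : ∀ n, (ascPochhammer ℂ n).eval a ≠ 0 := fun n h => by
    obtain ⟨k, -, hk⟩ := (ascPochhammer_eval_eq_zero_iff n a).mp h
    exact ha k (by rw [hk, neg_neg])
  set C := (-1) ^ N * (ascPochhammer ℂ N).eval (d + 1 - a - N) / (ascPochhammer ℂ N).eval a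
  set w : ℕ → ℂ := fun m => (ascPochhammer ℂ m).eval (-(N : ℂ)) *
    (ascPochhammer ℂ m).eval (d : ℂ) / ((ascPochhammer ℂ m).eval (d + 1 - a - N) * m.factorial)
  have hseries : HasSum (fun n => (ascPochhammer ℂ n).eval (a + N) *
      (ascPochhammer ℂ n).eval (d : ℂ) / ((ascPochhammer ℂ n).eval a * n.factorial) * z ^ n)
      (∑ m ∈ range (N + 1), C * w m * ((1 - z) ^ (d + m))⁻¹) := by
    refine (hasSum_sum fun m _ =>
      (hasSum_ascPochhammer_natCast_div_factorial_mul_pow (d + m) hz).mul_left (C * w m)).congr_fun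
        fun n => ?_
    rw [← div_div, ascPochhammer_eval_add_natCast_mul_div_eq_sum a d N n (ha' n) (ha' N) hc,
      mul_sum, sum_div, sum_mul]
    refine sum_congr rfl fun m _ => ?_
    push_cast
    ring
  rw [hyp2F1, hseries.tsum_eq, hyp2F1_neg_natCast_eq_sum, mul_sum]
  refine sum_congr rfl fun m _ => ?_
  rw [pow_add, mul_inv, inv_pow]
  ring

/-- `₂F₁(2s+2k−1, 2k; 2s; x) = (1−x)^{−2k} (∏_{i=0}^{2k−2}(2s+i))⁻¹ (∏_{i=2}^{2k}(2s−i))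
      · ₂F₁(−(2k−1), 2k; 2−2s; 1/(1−x))`. -/
theorem hyp2F1_linear_transform (k : ℕ) (hk : 1 ≤ k) (x : ℝ) (hx : x ∈ Set.Ioo (0 : ℝ) 1)
    (s : ℂ) (hs1 : ∀ n : ℕ, 2 * s ≠ -(n : ℂ))
    (hs2 : ∀ m : ℕ, 2 ≤ m → m ≤ 2 * k → 2 * s ≠ (m : ℂ)) :
    hyp2F1 (2 * s + 2 * k - 1) (2 * k) (2 * s) (x : ℂ)
      = ((1 - x : ℝ) : ℂ) ^ (-(2 * k : ℤ)) *
          (∏ i ∈ Finset.range (2 * k - 1), (2 * s + i))⁻¹ *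
          (∏ i ∈ Finset.Icc 2 (2 * k), (2 * s - i)) *
          hyp2F1 (-(2 * k - 1 : ℂ)) (2 * k) (2 - 2 * s) (((1 / (1 - x) : ℝ)) : ℂ) := by
  set N := 2 * k - 1
  have hN : 2 * k = N + 1 := by omega
  have hNc : (N : ℂ) = 2 * k - 1 := by push_cast [N, Nat.cast_sub (by omega : 1 ≤ 2 * k)]; ring
  have hc_eq : ((2 * k : ℕ) : ℂ) + 1 - 2 * s - N = 2 - 2 * s := by push_cast; rw [hNc]; ring
  have hc : (ascPochhammer ℂ N).eval (2 - 2 * s) ≠ 0 := by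
    intro h
    obtain ⟨j, hj, hj2⟩ := (ascPochhammer_eval_eq_zero_iff N _).mp h
    exact hs2 (j + 2) (by omega) (by omega) (by push_cast; linear_combination -hj2)
  have hz : ‖(x : ℂ)‖ < 1 := by
    rw [Complex.norm_real, Real.norm_eq_abs, abs_of_pos hx.1]
    exact hx.2
  have key := hyp2F1_add_natCast_eq_hyp2F1_neg_natCast (2 * s) N (2 * k) hs1 (by rwa [hc_eq]) hz
  rw [show 2 * s + 2 * k - 1 = 2 * s + N by rw [hNc]; ring, show -(2 * k - 1 : ℂ) = -N by rw [hNc],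
    show (2 * k : ℂ) = ((2 * k : ℕ) : ℂ) by push_cast; ring, key, hc_eq,
    zpow_neg, show (2 * k : ℤ) = ((2 * k : ℕ) : ℤ) by push_cast; ring, zpow_natCast,
    ← ascPochhammer_eval_eq_prod_range, ← Ico_add_one_right_eq_Icc, show 2 * k + 1 = 2 + N by omega,
    prod_Ico_sub_natCast_eq_ascPochhammer, Complex.ofReal_div, Complex.ofReal_one, one_div]
  push_cast
  ring
end

section
/- Let F : ℂ → ℂ be any function, let l ≥ 0 be an integer, and let s ∈ ℂ be such that 2s + m ≠ 0 for every integer m with 0 ≤ m ≤ 2l−2. Define functions G_p recursively by G_0 = F and G_{p+1}(w) = ( G_p(w) − G_p(w+1) ) / (2w + p). Then G_l(s) = ∑_{j=0}^{l} [ (−1)^j C(l, j) / ∏_{i=0, i≠j}^{l} (2s + j − 1 + i) ] · F(s+j). -/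
/-!
`G_l(s)` is a linear combination of `F(s), …, F(s+l)`, and by induction on `l` the coefficients
`c_{l,j}(s)` obey `(2s+l) c_{l+1,j}(s) = c_{l,j}(s) - c_{l,j-1}(s+1)`. Written over the common
denominator `∏_{0≤i≤l+1, i≠j} (2s+j-1+i)` (the denominators of `c_{l,j}(s)` and `c_{l,j-1}(s+1)`
lack only its last, resp. first, factor), the recursion becomes the binomial identity
`(2s+l) C(l+1,j) = C(l,j) (2s+j+l) + C(l,j-1) (2s+j-1)`.
-/

open Complex Finset

theorem Nat.choose_succ_mul_add_choose_mul (l j : ℕ) :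
    l.choose (j + 1) * (j + 1) + l.choose j * j = l * l.choose j := by
  rcases le_or_gt j l with hj | hj
  · rw [Nat.choose_succ_right_eq, ← mul_add, Nat.sub_add_cancel hj, mul_comm]
  · simp [Nat.choose_eq_zero_of_lt hj, Nat.choose_eq_zero_of_lt (hj.trans (Nat.lt_succ_self j))]

namespace IterDiff

noncomputable def denom (l : ℕ) (s : ℂ) (j : ℕ) : ℂ :=
  ∏ i ∈ (range (l + 1)).erase j, (2 * s + j - 1 + i)

noncomputable def coeff (l : ℕ) (s : ℂ) (j : ℕ) : ℂ :=
  (-1) ^ j * (l.choose j : ℂ) / denom l s j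

variable (l : ℕ) (s : ℂ)

theorem denom_succ_of_le {j : ℕ} (hj : j ≤ l) :
    denom (l + 1) s j = denom l s j * (2 * s + j + l) := by
  rw [denom, range_add_one, erase_insert_of_ne (by omega), prod_insert (by simp), denom]
  push_cast
  ring

theorem denom_succ_succ (j : ℕ) : denom (l + 1) s (j + 1) = (2 * s + j) * denom l (s + 1) j := by
  have hset : (range (l + 2)).erase (j + 1)
      = insert 0 (((range (l + 1)).erase j).map (addRightEmbedding 1)) := by
    ext (_ | i) <;> simp
  rw [denom, hset, prod_insert (by simp), prod_map, denom]
  simp only [addRightEmbedding_apply]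
  push_cast
  congr 1
  · ring
  · exact prod_congr rfl fun i _ => by ring

theorem denom_ne_zero (hs : ∀ m : ℤ, 0 ≤ m → m ≤ 2 * (l : ℤ) - 2 → 2 * s + (m : ℂ) ≠ 0)
    {j : ℕ} (hj : j ≤ l) : denom l s j ≠ 0 := by
  refine prod_ne_zero_iff.mpr fun i hi => ?_
  simp only [mem_erase, mem_range] at hi
  have := hs ((j : ℤ) + i - 1) (by omega) (by omega)
  push_cast at this
  exact fun h => this (by linear_combination h)

theorem coeff_eq_zero_of_lt {j : ℕ} (hj : l < j) : coeff l s j = 0 := by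
  simp [coeff, Nat.choose_eq_zero_of_lt hj]

theorem coeff_eq_div_denom_succ {j : ℕ} (hD : denom (l + 1) s j ≠ 0) :
    coeff l s j = (-1) ^ j * l.choose j * (2 * s + j + l) / denom (l + 1) s j := by
  rcases le_or_gt j l with hj | hj
  · rw [denom_succ_of_le l s hj] at hD ⊢
    rw [coeff, mul_div_mul_right _ _ (right_ne_zero_of_mul hD)]
  · simp [coeff_eq_zero_of_lt l s hj, Nat.choose_eq_zero_of_lt hj]

theorem coeff_add_one_eq_div_denom_succ_succ {j : ℕ} (hD : denom (l + 1) s (j + 1) ≠ 0) :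
    coeff l (s + 1) j = (-1) ^ j * l.choose j * (2 * s + j) / denom (l + 1) s (j + 1) := by
  rw [denom_succ_succ] at hD ⊢
  rw [coeff, mul_comm (2 * s + j), mul_div_mul_right _ _ (left_ne_zero_of_mul hD)]

theorem mul_coeff_succ_zero (hD : denom (l + 1) s 0 ≠ 0) :
    (2 * s + l) * coeff (l + 1) s 0 = coeff l s 0 := by
  rw [coeff_eq_div_denom_succ l s hD, coeff]
  simp only [pow_zero, Nat.choose_zero_right, Nat.cast_zero, Nat.cast_one]
  ring

theorem mul_coeff_succ_succ {j : ℕ} (hD : denom (l + 1) s (j + 1) ≠ 0) :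
    (2 * s + l) * coeff (l + 1) s (j + 1) = coeff l s (j + 1) - coeff l (s + 1) j := by
  have hchoose : (l.choose (j + 1) : ℂ) * (j + 1) + l.choose j * j = l * l.choose j := by
    exact_mod_cast Nat.choose_succ_mul_add_choose_mul l j
  rw [coeff_eq_div_denom_succ l s hD, coeff_add_one_eq_div_denom_succ_succ l s hD, coeff,
    mul_div_assoc', ← sub_div, Nat.choose_succ_succ']
  congr 1
  push_cast
  linear_combination (-1) ^ j * hchoose

theorem iterate_eq_sum_coeff (G : ℕ → ℂ → ℂ)
    (hG : ∀ p w, G (p + 1) w = (G p w - G p (w + 1)) / (2 * w + p))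
    (hs : ∀ m : ℤ, 0 ≤ m → m ≤ 2 * (l : ℤ) - 2 → 2 * s + (m : ℂ) ≠ 0) :
    G l s = ∑ j ∈ range (l + 1), coeff l s j * G 0 (s + j) := by
  induction l generalizing s with
  | zero => simp [coeff, denom]
  | succ l ih =>
    have hD : ∀ j ≤ l + 1, denom (l + 1) s j ≠ 0 := fun j hj => denom_ne_zero _ s hs hj
    have hl : 2 * s + l ≠ 0 := by
      simpa using hs l (by positivity) (by push_cast; omega)
    have ih₀ := ih s fun m h₀ hm => hs m h₀ (by push_cast; omega)
    have ih₁ := ih (s + 1) fun m h₀ hm => by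
      have := hs (m + 2) (by omega) (by push_cast; omega)
      push_cast at this
      exact fun h => this (by linear_combination h)
    have hterm : ∀ j ∈ range (l + 1), coeff (l + 1) s (j + 1) * G 0 (s + ↑(j + 1)) * (2 * s + l)
        = coeff l s (j + 1) * G 0 (s + ↑(j + 1)) - coeff l (s + 1) j * G 0 (s + 1 + j) := by
      intro j hj
      rw [mem_range] at hj
      rw [show s + 1 + (j : ℂ) = s + ↑(j + 1) by push_cast; ring, ← sub_mul,
        ← mul_coeff_succ_succ l s (hD (j + 1) (by omega))]
      ring
    have hext : ∑ j ∈ range (l + 1), coeff l s j * G 0 (s + j)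
        = ∑ j ∈ range (l + 2), coeff l s j * G 0 (s + j) := by
      rw [sum_range_succ _ (l + 1), coeff_eq_zero_of_lt l s (Nat.lt_succ_self l), zero_mul, add_zero]
    rw [hG, ih₀, ih₁, div_eq_iff hl, hext, sum_range_succ' (fun j => coeff l s j * G 0 (s + j)),
      sum_range_succ' (fun j => coeff (l + 1) s j * G 0 (s + j)), add_mul, sum_mul,
      sum_congr rfl hterm, sum_sub_distrib, ← mul_coeff_succ_zero l s (hD 0 (by omega))]
    ring

end IterDiff

/-- Partial-fraction formula for the iterated difference operator:
if `G₀ = F` and `G_{p+1}(w) = (G_p(w) − G_p(w+1))/(2w+p)`, then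
`G_l(s) = ∑_{j=0}^{l} [ (−1)^j C(l,j) / ∏_{0≤i≤l, i≠j} (2s+j−1+i) ] F(s+j)`. -/
theorem iterated_difference_formula (F : ℂ → ℂ) (l : ℕ) (s : ℂ)
    (hs : ∀ m : ℤ, 0 ≤ m → m ≤ 2 * (l : ℤ) - 2 → 2 * s + (m : ℂ) ≠ 0)
    (G : ℕ → ℂ → ℂ) (hG0 : ∀ w, G 0 w = F w)
    (hGrec : ∀ p w, G (p + 1) w = (G p w - G p (w + 1)) / (2 * w + p)) :
    G l s = ∑ j ∈ Finset.range (l + 1),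
      ((-1) ^ j * (l.choose j : ℂ) /
          ∏ i ∈ (Finset.range (l + 1)).erase j, (2 * s + j - 1 + i)) * F (s + j) := by
  simp only [IterDiff.iterate_eq_sum_coeff l s G hGrec hs, hG0]
  rfl
end
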